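/- Let σ ∈ {naive, stb, stage, pref, sem}, let 𝕊 be an extension-set, and let F be any σ-compact AF with σ(F) = 𝕊. Then the component-structure K(F) equals K(𝕊); equivalently, two arguments a,b ∈ Arg_𝕊 lie in the same weakly connected component of F if and only if (a,b) belongs to the reflexive-transitive closure of the relation (Arg_𝕊 × Arg_𝕊) ∖ Pairs_𝕊. -/

import Mathlib

structure AF where
  A : Finset ℕ
  R : Set (ℕ × ℕ)
  R_sub : ∀ p ∈ R, p.1 ∈ A ∧ p.2 ∈ A

namespace AF

def cf (F : AF) : Set (Set ℕ) :=
  {S | S ⊆ ↑F.A ∧ ∀ a ∈ S, ∀ b ∈ S, (a, b) ∉ F.R}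

def defends (F : AF) (S : Set ℕ) (a : ℕ) : Prop :=
  ∀ b, (b, a) ∈ F.R → ∃ s ∈ S, (s, b) ∈ F.R

def adm (F : AF) : Set (Set ℕ) :=
  {S | S ∈ F.cf ∧ ∀ a ∈ S, F.defends S a}

def rng (F : AF) (S : Set ℕ) : Set ℕ :=
  S ∪ {b | ∃ s ∈ S, (s, b) ∈ F.R}

def naive (F : AF) : Set (Set ℕ) :=
  {S | S ∈ F.cf ∧ ∀ T ∈ F.cf, S ⊆ T → S = T}

def stb (F : AF) : Set (Set ℕ) :=
  {S | S ∈ F.cf ∧ ∀ a ∈ F.A, a ∉ S → ∃ s ∈ S, (s, a) ∈ F.R}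

def pref (F : AF) : Set (Set ℕ) :=
  {S | S ∈ F.adm ∧ ∀ T ∈ F.adm, S ⊆ T → S = T}

def stage (F : AF) : Set (Set ℕ) :=
  {S | S ∈ F.cf ∧ ¬ ∃ T ∈ F.cf, F.rng S ⊂ F.rng T}

def sem (F : AF) : Set (Set ℕ) :=
  {S | S ∈ F.adm ∧ ¬ ∃ T ∈ F.adm, F.rng S ⊂ F.rng T}

end AF

abbrev Semantics := AF → Set (Set ℕ)

def StandardSemantics : Set Semantics :=
  {AF.naive, AF.stb, AF.stage, AF.pref, AF.sem}

def AFCompact (σ : Semantics) (F : AF) : Prop :=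
  ∀ a ∈ F.A, ∃ S ∈ σ F, a ∈ S

def CAF (σ : Semantics) : Set AF := {F | AFCompact σ F}

def ArgS (𝕊 : Set (Set ℕ)) : Set ℕ := ⋃₀ 𝕊

def PairsS (𝕊 : Set (Set ℕ)) : Set (ℕ × ℕ) :=
  {p | ∃ S ∈ 𝕊, p.1 ∈ S ∧ p.2 ∈ S}

def IsExtensionSet (𝕊 : Set (Set ℕ)) : Prop := (ArgS 𝕊).Finite

def AFStep (F : AF) (a b : ℕ) : Prop := (a, b) ∈ F.R ∨ (b, a) ∈ F.R

def AFConnected (F : AF) : Prop :=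
  ∀ a ∈ F.A, ∀ b ∈ F.A, Relation.ReflTransGen (AFStep F) a b

def sameComp (F : AF) (a b : ℕ) : Prop := Relation.ReflTransGen (AFStep F) a b

def comps (F : AF) : Set (Set ℕ) :=
  {K | ∃ a ∈ F.A, K = {b ∈ (↑F.A : Set ℕ) | sameComp F a b}}

def nopairs (𝕊 : Set (Set ℕ)) (a b : ℕ) : Prop :=
  a ∈ ArgS 𝕊 ∧ b ∈ ArgS 𝕊 ∧ (a, b) ∉ PairsS 𝕊

def compsS (𝕊 : Set (Set ℕ)) : Set (Set ℕ) :=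
  {K | ∃ a ∈ ArgS 𝕊, K = {b ∈ ArgS 𝕊 | Relation.ReflTransGen (nopairs 𝕊) a b}}

noncomputable def sigmaMax (σ : Semantics) (n : ℕ) : ℕ :=
  sSup {k | ∃ F : AF, F.A.card = n ∧ (σ F).ncard = k}

noncomputable def sigmaMaxCon (σ : Semantics) (n : ℕ) : ℕ :=
  sSup {k | ∃ F : AF, F.A.card = n ∧ AFConnected F ∧ (σ F).ncard = k}

noncomputable def sigmaMax2 (σ : Semantics) (n : ℕ) : ℕ :=
  sSup ({k | ∃ F : AF, F.A.card = n ∧ (σ F).ncard = k} \ {sigmaMax σ n})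

def cfSet (𝕊 : Set (Set ℕ)) : Set (Set ℕ) :=
  {S | S ⊆ ArgS 𝕊 ∧ ∀ a ∈ S, ∀ b ∈ S, (a, b) ∈ PairsS 𝕊}

def plusSet (𝕊 : Set (Set ℕ)) : Set (Set ℕ) :=
  {S | S ∈ cfSet 𝕊 ∧ ∀ T ∈ cfSet 𝕊, S ⊆ T → S = T}

def minusSet (𝕊 : Set (Set ℕ)) : Set (Set ℕ) := plusSet 𝕊 \ 𝕊

def Sig (σ : Semantics) : Set (Set (Set ℕ)) := {𝕊 | ∃ F : AF, σ F = 𝕊}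

def cSig (σ : Semantics) : Set (Set (Set ℕ)) :=
  {𝕊 | ∃ F : AF, AFCompact σ F ∧ σ F = 𝕊}

def Pcon (σ : Semantics) (n : ℕ) : Set ℕ :=
  {k | ∃ F : AF, AFCompact σ F ∧ AFConnected F ∧ F.A.card = n ∧ (σ F).ncard = k}

open Classical in
noncomputable def restrictAF (F : AF) (K : Set ℕ) : AF where
  A := F.A.filter (fun a => a ∈ K)
  R := {p | p ∈ F.R ∧ p.1 ∈ K ∧ p.2 ∈ K}
  R_sub := fun p hp => by
    have h := F.R_sub p hp.1
    simp only [Finset.mem_filter]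
    exact ⟨⟨h.1, hp.2.1⟩, ⟨h.2, hp.2.2⟩⟩

def IsExclusionMapping (𝕊 : Set (Set ℕ)) (Rm : Set (ℕ × ℕ)) : Prop :=
  ∃ f : Set ℕ → ℕ,
    (∀ S ∈ minusSet 𝕊, f S ∈ ArgS 𝕊 ∧ f S ∉ S) ∧
    Rm = {p | ∃ S ∈ minusSet 𝕊, p.1 ∈ S ∧ p.2 = f S ∧ p ∉ PairsS 𝕊}

def Independent (𝕊 : Set (Set ℕ)) : Prop :=
  ∃ Rm : Set (ℕ × ℕ), IsExclusionMapping 𝕊 Rm ∧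
    (∀ a b, (a, b) ∈ Rm → (b, a) ∈ Rm → a = b) ∧
    ∀ S ∈ 𝕊, ∀ a ∈ ArgS 𝕊 \ S, ∃ s ∈ S, (s, a) ∉ Rm ∪ PairsS 𝕊

def ConflictExplicit (σ : Semantics) (F : AF) : Prop :=
  ∀ a ∈ F.A, ∀ b ∈ F.A, (a, b) ∉ PairsS (σ F) → (a, b) ∈ F.R ∨ (b, a) ∈ F.R

noncomputable def canonicalCF (𝕊 : Set (Set ℕ)) (h : IsExtensionSet 𝕊) : AF where
  A := h.toFinset
  R := {p | p.1 ∈ ArgS 𝕊 ∧ p.2 ∈ ArgS 𝕊 ∧ p ∉ PairsS 𝕊}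
  R_sub := fun p hp => by
    exact ⟨h.mem_toFinset.2 hp.1, h.mem_toFinset.2 hp.2.1⟩

/-!
Gluing along a component: if `C` is a union of weakly connected components of `F` and `S`, `T`
are `σ`-extensions, then so is `(S ∩ C) ∪ (T \ C)` (that is, `C.ite S T`), for each of the five
semantics. Hence two credulously accepted arguments in different components always occur together
in some extension, so every pair missing from `Pairs_𝕊` lies inside one component. Conversely, two
arguments related by an attack never share a (conflict-free) extension, and by compactness both
are in `Arg_𝕊`. So the two relations generate the same equivalence relation on `A = Arg_𝕊`.
-/

open Relation

namespace Set

variable {α : Type*} {t s s' : Set α} {x : α}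

theorem mem_ite_of_mem (hx : x ∈ t) : x ∈ t.ite s s' ↔ x ∈ s := by
  simp [Set.ite, hx]

theorem mem_ite_of_notMem (hx : x ∉ t) : x ∈ t.ite s s' ↔ x ∈ s' := by
  simp [Set.ite, hx]

end Set

section MaximalBy

variable {α : Type*} {C S T : Set α} {f : Set α → Set α} {P : Set (Set α)}

def MaximalBy (f : Set α → Set α) (P : Set (Set α)) : Set (Set α) :=
  {S | S ∈ P ∧ ∀ V ∈ P, f S ⊆ f V → f V ⊆ f S}

theorem maximalBy_id :
    MaximalBy id P = {S | S ∈ P ∧ ∀ T ∈ P, S ⊆ T → S = T} := by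
  ext S
  refine and_congr_right fun _ => forall₂_congr fun T _ => ?_
  exact ⟨fun h hST => hST.antisymm (h hST), fun h hST => (h hST).ge⟩

theorem maximalBy_eq_not_ssubset :
    MaximalBy f P = {S | S ∈ P ∧ ¬ ∃ T ∈ P, f S ⊂ f T} := by
  ext S
  refine and_congr_right fun _ => ?_
  simp only [not_exists, not_and, Set.ssubset_def, not_not]

theorem ite_mem_maximalBy (hP : ∀ S ∈ P, ∀ T ∈ P, C.ite S T ∈ P)
    (hf : ∀ S T, f (C.ite S T) = C.ite (f S) (f T))
    (hS : S ∈ MaximalBy f P) (hT : T ∈ MaximalBy f P) : C.ite S T ∈ MaximalBy f P := by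
  refine ⟨hP S hS.1 T hT.1, fun V hV hle => ?_⟩
  -- compare `S` with `C.ite V S` and `T` with `C.ite T V`
  rw [hf] at hle ⊢
  have hSV : f S ∩ C ⊆ f V := Set.ite_inter_self C (f S) (f T) ▸ Set.inter_subset_left.trans hle
  have hTV : f T \ C ⊆ f V := Set.ite_sdiff_self C (f S) (f T) ▸ Set.sdiff_subset.trans hle
  have hVS : f V ∩ C ⊆ f S := by
    have h := hS.2 _ (hP V hV S hS.1) (by rw [hf]; exact Set.subset_ite.2 ⟨hSV, Set.sdiff_subset⟩)
    rw [hf] at h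
    exact Set.ite_inter_self C (f V) (f S) ▸ Set.inter_subset_left.trans h
  have hVT : f V \ C ⊆ f T := by
    have h := hT.2 _ (hP T hT.1 V hV)
      (by rw [hf]; exact Set.subset_ite.2 ⟨Set.inter_subset_left, hTV⟩)
    rw [hf] at h
    exact Set.ite_sdiff_self C (f T) (f V) ▸ Set.sdiff_subset.trans h
  exact Set.subset_ite.2 ⟨hVS, hVT⟩

end MaximalBy

namespace AF

variable {F : AF} {S T : Set ℕ} {a b : ℕ}

theorem mem_A_of_step (h : AFStep F a b) : a ∈ F.A ∧ b ∈ F.A := by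
  rcases h with h | h
  exacts [F.R_sub _ h, (F.R_sub _ h).symm]

theorem naive_eq_maximalBy : F.naive = MaximalBy id F.cf := by
  rw [maximalBy_id]; rfl

theorem pref_eq_maximalBy : F.pref = MaximalBy id F.adm := by
  rw [maximalBy_id]; rfl

theorem stage_eq_maximalBy : F.stage = MaximalBy F.rng F.cf := by
  rw [maximalBy_eq_not_ssubset]; rfl

theorem sem_eq_maximalBy : F.sem = MaximalBy F.rng F.adm := by
  rw [maximalBy_eq_not_ssubset]; rfl

theorem mem_rng_congr {z : ℕ} (h : ∀ x, sameComp F x z → (x ∈ S ↔ x ∈ T)) :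
    z ∈ F.rng S ↔ z ∈ F.rng T := by
  refine or_congr (h z .refl) (exists_congr fun s => and_congr_left fun hsz => ?_)
  exact h s (.single (Or.inl hsz))

end AF

def AttackClosed (F : AF) (C : Set ℕ) : Prop :=
  ∀ x y, AFStep F x y → (x ∈ C ↔ y ∈ C)

theorem attackClosed_setOf_sameComp (F : AF) (a : ℕ) : AttackClosed F {x | sameComp F a x} :=
  fun _ _ h => ⟨fun hx => hx.tail h, fun hy => hy.tail h.symm⟩

namespace AttackClosed

variable {F : AF} {C S T : Set ℕ}

theorem mem_iff_of_sameComp (hC : AttackClosed F C) {x y : ℕ} (h : sameComp F x y) :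
    x ∈ C ↔ y ∈ C := by
  induction h with
  | refl => rfl
  | tail _ hstep ih => exact ih.trans (hC _ _ hstep)

theorem exists_mem_ite_iff_of_sameComp {P : Set ℕ → Prop} (hC : AttackClosed F C) (hS : P S)
    (hT : P T) (y : ℕ) :
    ∃ U, P U ∧ ∀ x, sameComp F x y → (x ∈ C.ite S T ↔ x ∈ U) := by
  by_cases hy : y ∈ C
  · exact ⟨S, hS, fun x hx => Set.mem_ite_of_mem ((hC.mem_iff_of_sameComp hx).2 hy)⟩
  · exact ⟨T, hT, fun x hx => Set.mem_ite_of_notMem (mt (hC.mem_iff_of_sameComp hx).1 hy)⟩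

theorem ite_mem_cf (hC : AttackClosed F C) (hS : S ∈ F.cf) (hT : T ∈ F.cf) :
    C.ite S T ∈ F.cf := by
  refine ⟨(Set.ite_subset_union C S T).trans (Set.union_subset hS.1 hT.1), ?_⟩
  intro x hx y hy hxy
  obtain ⟨U, hU, hloc⟩ := hC.exists_mem_ite_iff_of_sameComp hS hT y
  exact hU.2 x ((hloc x (.single (Or.inl hxy))).1 hx) y ((hloc y .refl).1 hy) hxy

theorem ite_mem_adm (hC : AttackClosed F C) (hS : S ∈ F.adm) (hT : T ∈ F.adm) :
    C.ite S T ∈ F.adm := by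
  refine ⟨hC.ite_mem_cf hS.1 hT.1, ?_⟩
  intro x hx b hbx
  obtain ⟨U, hU, hloc⟩ := hC.exists_mem_ite_iff_of_sameComp hS hT x
  obtain ⟨s, hs, hsb⟩ := hU.2 x ((hloc x .refl).1 hx) b hbx
  exact ⟨s, (hloc s (.head (Or.inl hsb) (.single (Or.inl hbx)))).2 hs, hsb⟩

theorem ite_mem_stb (hC : AttackClosed F C) (hS : S ∈ F.stb) (hT : T ∈ F.stb) :
    C.ite S T ∈ F.stb := by
  refine ⟨hC.ite_mem_cf hS.1 hT.1, ?_⟩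
  intro x hxA hx
  obtain ⟨U, hU, hloc⟩ := hC.exists_mem_ite_iff_of_sameComp hS hT x
  obtain ⟨s, hs, hsx⟩ := hU.2 x hxA (mt (hloc x .refl).2 hx)
  exact ⟨s, (hloc s (.single (Or.inl hsx))).2 hs, hsx⟩

theorem rng_ite (hC : AttackClosed F C) (S T : Set ℕ) :
    F.rng (C.ite S T) = C.ite (F.rng S) (F.rng T) := by
  ext z
  by_cases hz : z ∈ C
  · rw [Set.mem_ite_of_mem hz]
    exact F.mem_rng_congr fun x hx => Set.mem_ite_of_mem ((hC.mem_iff_of_sameComp hx).2 hz)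
  · rw [Set.mem_ite_of_notMem hz]
    exact F.mem_rng_congr fun x hx =>
      Set.mem_ite_of_notMem (mt (hC.mem_iff_of_sameComp hx).1 hz)

end AttackClosed

section Standard

variable {σ : Semantics} {F : AF} {C S T : Set ℕ} {a b : ℕ}

theorem mem_cf_of_mem_standard (hσ : σ ∈ StandardSemantics) (hS : S ∈ σ F) : S ∈ F.cf := by
  rcases hσ with rfl | rfl | rfl | rfl | rfl
  exacts [hS.1, hS.1, hS.1, hS.1.1, hS.1.1]

theorem ite_mem_standard (hσ : σ ∈ StandardSemantics) (hC : AttackClosed F C)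
    (hS : S ∈ σ F) (hT : T ∈ σ F) : C.ite S T ∈ σ F := by
  have hcf : ∀ S ∈ F.cf, ∀ T ∈ F.cf, C.ite S T ∈ F.cf := fun _ hS _ hT => hC.ite_mem_cf hS hT
  have hadm : ∀ S ∈ F.adm, ∀ T ∈ F.adm, C.ite S T ∈ F.adm :=
    fun _ hS _ hT => hC.ite_mem_adm hS hT
  rcases hσ with rfl | rfl | rfl | rfl | rfl
  · rw [AF.naive_eq_maximalBy] at *
    exact ite_mem_maximalBy hcf (fun _ _ => rfl) hS hT
  · exact hC.ite_mem_stb hS hT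
  · rw [AF.stage_eq_maximalBy] at *
    exact ite_mem_maximalBy hcf hC.rng_ite hS hT
  · rw [AF.pref_eq_maximalBy] at *
    exact ite_mem_maximalBy hadm (fun _ _ => rfl) hS hT
  · rw [AF.sem_eq_maximalBy] at *
    exact ite_mem_maximalBy hadm hC.rng_ite hS hT

theorem sameComp_of_notMem_pairsS (hσ : σ ∈ StandardSemantics) (ha : a ∈ ArgS (σ F))
    (hb : b ∈ ArgS (σ F)) (hab : (a, b) ∉ PairsS (σ F)) : sameComp F a b := by
  by_contra hnc
  obtain ⟨S, hS, haS⟩ := ha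
  obtain ⟨T, hT, hbT⟩ := hb
  have hC := attackClosed_setOf_sameComp F a
  exact hab ⟨_, ite_mem_standard hσ hC hS hT, (Set.mem_ite_of_mem ReflTransGen.refl).2 haS,
    (Set.mem_ite_of_notMem hnc).2 hbT⟩

theorem notMem_pairsS_of_step (hσ : σ ∈ StandardSemantics) (h : AFStep F a b) :
    (a, b) ∉ PairsS (σ F) := by
  rintro ⟨S, hS, haS, hbS⟩
  have hcf := mem_cf_of_mem_standard hσ hS
  rcases h with h | h
  exacts [hcf.2 a haS b hbS h, hcf.2 b hbS a haS h]

theorem argS_eq_of_compact (hσ : σ ∈ StandardSemantics) (hcomp : AFCompact σ F) :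
    ArgS (σ F) = F.A :=
  (Set.sUnion_subset fun _ hS => (mem_cf_of_mem_standard hσ hS).1).antisymm
    fun x hx => Set.mem_sUnion.2 (hcomp x hx)

theorem sameComp_eq_reflTransGen_nopairs (hσ : σ ∈ StandardSemantics)
    (hcomp : AFCompact σ F) : sameComp F = ReflTransGen (nopairs (σ F)) := by
  have hA := argS_eq_of_compact hσ hcomp
  refine le_antisymm (ReflTransGen.mono fun a b h => ?_) (reflTransGen_closed fun a b h => ?_)
  · obtain ⟨ha, hb⟩ := AF.mem_A_of_step h
    exact ⟨hA ▸ ha, hA ▸ hb, notMem_pairsS_of_step hσ h⟩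
  · exact sameComp_of_notMem_pairsS hσ h.1 h.2.1 h.2.2

end Standard

theorem compact_component_structure_general (σ : Semantics) (hσ : σ ∈ StandardSemantics)
    (𝕊 : Set (Set ℕ))
    (F : AF) (hcomp : AFCompact σ F) (hσF : σ F = 𝕊) :
    comps F = compsS 𝕊 ∧
    ∀ a ∈ ArgS 𝕊, ∀ b ∈ ArgS 𝕊,
      (sameComp F a b ↔ Relation.ReflTransGen (nopairs 𝕊) a b) := by
  subst hσF
  have hA := argS_eq_of_compact hσ hcomp
  have hrel := sameComp_eq_reflTransGen_nopairs hσ hcomp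
  refine ⟨?_, fun a _ b _ => by rw [hrel]⟩
  simp only [comps, compsS, hA, ← hrel, Finset.mem_coe]

theorem compact_component_structure (σ : Semantics) (hσ : σ ∈ StandardSemantics)
    (𝕊 : Set (Set ℕ)) (hext : IsExtensionSet 𝕊)
    (F : AF) (hcomp : AFCompact σ F) (hσF : σ F = 𝕊) :
    comps F = compsS 𝕊 ∧
    ∀ a ∈ ArgS 𝕊, ∀ b ∈ ArgS 𝕊,
      (sameComp F a b ↔ Relation.ReflTransGen (nopairs 𝕊) a b) :=
  compact_component_structure_general σ hσ 𝕊 F hcomp hσF
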